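/- arXiv:1503.02927 — 2 statements merged into one kernel-verified Lean document; each statement's English description precedes it below -/
import Mathlib

section
/- Let Σ_S, Σ_U, D be symmetric positive definite matrices of the same size with D ⪯ Σ_S, and let Θ satisfy 0 ≺ Θ ⪯ Σ_S (block matrices with Θ1 ⪯ D1 as its first diagonal block). Then det(Σ_S)·det(Θ2 + Σ_{U2}) / (det(Θ)·det(D2 + Σ_{U2})) ≥ det(Σ_S + Σ_U) / (det(D1 + Σ_{U1})·det(D2 + Σ_{U2})), where subscripts 1 and 2 denote the two diagonal blocks of each matrix. -/
/-!
Since `det (X + Σ_U) = det X · det (X⁻¹ + Σ_U⁻¹) · det Σ_U` and matrix inversion is antitone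
for the Loewner order, `det (X + Σ_U) / det X` decreases as `X` increases, which gives `det (Σ_S + Σ_U) · det Θ ≤ det (Θ + Σ_U) · det Σ_S`. Fischer's inequality
bounds `det (Θ + Σ_U)` by the product of the determinants of its diagonal blocks, and monotonicity
of the determinant together with `Θ₁ ⪯ D₁` replaces the first block by `D₁ + Σ_{U1}`.
-/

open scoped MatrixOrder

namespace Matrix

section Square

variable {n : Type*} [Fintype n] [DecidableEq n]

theorem one_le_det_of_one_le {C : Matrix n n ℝ} (h : 1 ≤ C) : 1 ≤ C.det := by
  have hC : C.IsHermitian := by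
    simpa using (le_iff.mp h).isHermitian.add isHermitian_one
  have hspec := (algebraMap_le_iff_le_spectrum (r := (1 : ℝ)) (a := C) hC.isSelfAdjoint).mp
    (by simpa using h)
  rw [hC.det_eq_prod_eigenvalues]
  exact Finset.one_le_prod fun i _ => by simpa using hspec _ (hC.eigenvalues_mem_spectrum_real i)

theorem PosDef.det_le_det {A B : Matrix n n ℝ} (hA : A.PosDef) (hAB : A ≤ B) :
    A.det ≤ B.det := by
  set S := CFC.sqrt A
  have hSS : S * S = A := CFC.sqrt_mul_sqrt_self A hA.posSemidef.nonneg
  have hS : S⁻¹.IsHermitian := (IsSelfAdjoint.of_nonneg (CFC.sqrt_nonneg A)).isHermitian.inv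
  have hdetS : S.det * S.det = A.det := by rw [← det_mul, hSS]
  have hunit : IsUnit S.det := isUnit_iff_ne_zero.mpr fun h0 => by
    simp [h0, hA.det_pos.ne] at hdetS
  have hone : S⁻¹ * A * S⁻¹ = 1 := by
    rw [← hSS, ← mul_assoc, nonsing_inv_mul _ hunit, one_mul, mul_nonsing_inv _ hunit]
  have hdet := one_le_det_of_one_le (hone ▸ hS.isSelfAdjoint.conjugate_le_conjugate hAB)
  rw [det_mul, det_mul, det_nonsing_inv, Ring.inverse_eq_inv'] at hdet
  have hs : S.det ≠ 0 := hunit.ne_zero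
  calc A.det = S.det * S.det * 1 := by rw [mul_one, hdetS]
    _ ≤ S.det * S.det * (S.det⁻¹ * B.det * S.det⁻¹) := by gcongr; exact mul_self_nonneg _
    _ = B.det := by field_simp

theorem PosDef.inv_le_inv {A B : Matrix n n ℝ} (hA : A.PosDef) (hAB : A ≤ B) : B⁻¹ ≤ A⁻¹ := by
  have hB : B.PosDef := add_sub_cancel A B ▸ hA.add_posSemidef (le_iff.mp hAB)
  have := hA.isUnit.invertible
  have := hB.isUnit.invertible
  have := hA.inv.isUnit.invertible
  -- both Schur complements of this block matrix are the differences we compare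
  have hblock : (fromBlocks B 1 1ᴴ A⁻¹).PosSemidef := by
    rw [hA.inv.fromBlocks₂₂, inv_inv_of_invertible]
    simpa using le_iff.mp hAB
  simpa [le_iff] using (hB.fromBlocks₁₁ 1 A⁻¹).mp hblock

theorem det_add_eq_det_mul_det_inv_add_inv_mul_det {M U : Matrix n n ℝ} (hM : IsUnit M.det)
    (hU : IsUnit U.det) : (M + U).det = M.det * (M⁻¹ + U⁻¹).det * U.det := by
  rw [← det_mul, ← det_mul, Matrix.mul_add, mul_nonsing_inv _ hM, Matrix.add_mul, one_mul,
    nonsing_inv_mul_cancel_right _ _ hU, add_comm]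

theorem PosDef.det_add_mul_det_le_det_add_mul_det {A B U : Matrix n n ℝ} (hA : A.PosDef)
    (hU : U.PosDef) (hAB : A ≤ B) : (B + U).det * A.det ≤ (A + U).det * B.det := by
  have hB : B.PosDef := add_sub_cancel A B ▸ hA.add_posSemidef (le_iff.mp hAB)
  have hinv : (B⁻¹ + U⁻¹).det ≤ (A⁻¹ + U⁻¹).det :=
    (hB.inv.add hU.inv).det_le_det (add_le_add_left (hA.inv_le_inv hAB) _)
  have hpos : 0 < A.det * B.det * U.det := by
    have := hA.det_pos; have := hB.det_pos; have := hU.det_pos; positivity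
  rw [det_add_eq_det_mul_det_inv_add_inv_mul_det hB.det_pos.ne'.isUnit hU.det_pos.ne'.isUnit,
    det_add_eq_det_mul_det_inv_add_inv_mul_det hA.det_pos.ne'.isUnit hU.det_pos.ne'.isUnit]
  calc _ = A.det * B.det * U.det * (B⁻¹ + U⁻¹).det := by ring
    _ ≤ A.det * B.det * U.det * (A⁻¹ + U⁻¹).det := by gcongr
    _ = _ := by ring

end Square

section Blocks

variable {p q : Type*}

theorem PosDef.toBlocks₁₁ {M : Matrix (p ⊕ q) (p ⊕ q) ℝ} (hM : M.PosDef) :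
    M.toBlocks₁₁.PosDef :=
  hM.submatrix Sum.inl_injective

theorem PosDef.toBlocks₂₂ {M : Matrix (p ⊕ q) (p ⊕ q) ℝ} (hM : M.PosDef) :
    M.toBlocks₂₂.PosDef :=
  hM.submatrix Sum.inr_injective

variable [Fintype p] [DecidableEq p] [Fintype q] [DecidableEq q]

theorem PosDef.det_le_det_toBlocks₁₁_mul_det_toBlocks₂₂ {M : Matrix (p ⊕ q) (p ⊕ q) ℝ}
    (hM : M.PosDef) : M.det ≤ M.toBlocks₁₁.det * M.toBlocks₂₂.det := by
  set A := M.toBlocks₁₁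
  set B := M.toBlocks₁₂
  set D := M.toBlocks₂₂
  have hA : A.PosDef := hM.toBlocks₁₁
  have := hA.isUnit.invertible
  have hM' : fromBlocks A B Bᴴ D = M := by
    have hherm := hM.isHermitian
    rw [← fromBlocks_toBlocks M, isHermitian_fromBlocks_iff] at hherm
    rw [hherm.2.1, fromBlocks_toBlocks]
  have hdet : M.det = A.det * (D - Bᴴ * A⁻¹ * B).det := by
    rw [← hM', det_fromBlocks₁₁, invOf_eq_nonsing_inv]
  have hschur : (D - Bᴴ * A⁻¹ * B).PosDef := by
    refine ((hA.fromBlocks₁₁ B D).mp (hM' ▸ hM.posSemidef)).posDef_iff_det_ne_zero.mpr ?_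
    exact right_ne_zero_of_mul (hdet ▸ hM.det_pos.ne')
  have hle : D - Bᴴ * A⁻¹ * B ≤ D := by
    rw [le_iff, sub_sub_cancel]
    exact hA.inv.posSemidef.conjTranspose_mul_mul_same B
  rw [hdet]
  exact mul_le_mul_of_nonneg_left (hschur.det_le_det hle) hA.det_pos.le

end Blocks

end Matrix

theorem stmt_9_general {m1 m2 : ℕ}
    (SS SU D Θ : Matrix (Fin m1 ⊕ Fin m2) (Fin m1 ⊕ Fin m2) ℝ)
    (hSS : SS.PosDef) (hSU : SU.PosDef) (hD : D.PosDef)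
    (hΘpos : Θ.PosDef) (hΘle : (SS - Θ).PosSemidef)
    (hΘ1 : (D.toBlocks₁₁ - Θ.toBlocks₁₁).PosSemidef) :
    SS.det * (Θ.toBlocks₂₂ + SU.toBlocks₂₂).det /
        (Θ.det * (D.toBlocks₂₂ + SU.toBlocks₂₂).det) ≥
      (SS + SU).det /
        ((D.toBlocks₁₁ + SU.toBlocks₁₁).det * (D.toBlocks₂₂ + SU.toBlocks₂₂).det) := by
  have hΘ1U : (Θ.toBlocks₁₁ + SU.toBlocks₁₁).PosDef := hΘpos.toBlocks₁₁.add hSU.toBlocks₁₁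
  have hΘ2U := (hΘpos.toBlocks₂₂.add hSU.toBlocks₂₂).det_pos
  have hD1U := (hD.toBlocks₁₁.add hSU.toBlocks₁₁).det_pos
  have hD2U := (hD.toBlocks₂₂.add hSU.toBlocks₂₂).det_pos
  have hmono : (SS + SU).det * Θ.det ≤ (Θ + SU).det * SS.det :=
    hΘpos.det_add_mul_det_le_det_add_mul_det hSU hΘle
  have hfischer : (Θ + SU).det ≤
      (Θ.toBlocks₁₁ + SU.toBlocks₁₁).det * (Θ.toBlocks₂₂ + SU.toBlocks₂₂).det :=
    (hΘpos.add hSU).det_le_det_toBlocks₁₁_mul_det_toBlocks₂₂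
  have hblock₁ : (Θ.toBlocks₁₁ + SU.toBlocks₁₁).det ≤ (D.toBlocks₁₁ + SU.toBlocks₁₁).det :=
    hΘ1U.det_le_det (add_le_add_left hΘ1 _)
  have hΘdet := hΘpos.det_pos
  have hSSdet := hSS.det_pos
  rw [ge_iff_le, div_le_div_iff₀ (by positivity) (by positivity)]
  calc (SS + SU).det * (Θ.det * (D.toBlocks₂₂ + SU.toBlocks₂₂).det)
      = (SS + SU).det * Θ.det * (D.toBlocks₂₂ + SU.toBlocks₂₂).det := by ring
    _ ≤ (Θ + SU).det * SS.det * (D.toBlocks₂₂ + SU.toBlocks₂₂).det := by gcongr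
    _ ≤ (Θ.toBlocks₁₁ + SU.toBlocks₁₁).det * (Θ.toBlocks₂₂ + SU.toBlocks₂₂).det * SS.det *
          (D.toBlocks₂₂ + SU.toBlocks₂₂).det := by gcongr
    _ ≤ (D.toBlocks₁₁ + SU.toBlocks₁₁).det * (Θ.toBlocks₂₂ + SU.toBlocks₂₂).det * SS.det *
          (D.toBlocks₂₂ + SU.toBlocks₂₂).det := by gcongr
    _ = _ := by ring

theorem stmt_9 {m1 m2 : ℕ}
    (SS SU D Θ : Matrix (Fin m1 ⊕ Fin m2) (Fin m1 ⊕ Fin m2) ℝ)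
    (hSS : SS.PosDef) (hSU : SU.PosDef) (hD : D.PosDef)
    (hDle : (SS - D).PosSemidef)
    (hΘpos : Θ.PosDef) (hΘle : (SS - Θ).PosSemidef)
    (hΘ1 : (D.toBlocks₁₁ - Θ.toBlocks₁₁).PosSemidef) :
    SS.det * (Θ.toBlocks₂₂ + SU.toBlocks₂₂).det /
        (Θ.det * (D.toBlocks₂₂ + SU.toBlocks₂₂).det) ≥
      (SS + SU).det /
        ((D.toBlocks₁₁ + SU.toBlocks₁₁).det * (D.toBlocks₂₂ + SU.toBlocks₂₂).det) :=
  stmt_9_general SS SU D Θ hSS hSU hD hΘpos hΘle hΘ1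
end

section
/- The function γ ↦ Θ(γ) is continuous on (0, ∞), where Θ(γ) is the unique maximizer of log det(Θ) over symmetric matrices Θ subject to Θ1 ⪯ D1 (first diagonal block constraint), θ2 ≤ γ (last diagonal entry constraint), and 0 ⪯ Θ ⪯ Σ, with Σ ≻ 0, D1 ≻ 0 fixed. -/
/-! All feasible sets lie in the compact set `{Θ | 0 ⪯ Θ ⪯ Σ}`, so it suffices that every cluster
point `X` of `Θ(γ)` as `γ → γ₀` equals `Θ(γ₀)`. The graph `{(γ, Θ) | Θ feasible at γ}` is closed,
so `X` is feasible at `γ₀`. Shrinking `Θ(γ₀)` by the factor `min 1 (γ / γ₀)` makes it feasible at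
`γ`, whence `det Θ(γ) ≥ min 1 (γ / γ₀) ^ (m + 1) * det Θ(γ₀)` and, in the limit,
`det X ≥ det Θ(γ₀)`: `X` is a maximizer as well. Maximizers over a convex set are unique since
`det ((A + B) / 2) > det A` whenever `det A = det B > 0` and `A ≠ B`; writing `B = √A N √A`, this is
AM-GM for the eigenvalues of `N`, whose product is `1`. -/

open Matrix Filter Topology

theorem MapClusterPt.prodMk {α X Y : Type*} [TopologicalSpace X] [TopologicalSpace Y]
    {F : Filter α} {f : α → X} {g : α → Y} {a : X} {y : Y} (hf : Tendsto f F (𝓝 a))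
    (hg : MapClusterPt y F g) : MapClusterPt (a, y) F fun x => (f x, g x) := by
  rw [mapClusterPt_iff_frequently]
  intro s hs
  obtain ⟨u, hu, v, hv, huv⟩ := mem_nhds_prod_iff.1 hs
  exact ((hg.frequently hv).and_eventually (hf hu)).mono fun x hx => huv ⟨hx.2, hx.1⟩

theorem one_lt_prod_half_one_add {ι : Type*} [Fintype ι] {x : ι → ℝ} (hx : ∀ i, 0 ≤ x i)
    (hprod : ∏ i, x i = 1) (hne : ∃ i, x i ≠ 1) : 1 < ∏ i, (1 + x i) / 2 := by
  have hpos (i : ι) : 0 < x i := (hx i).lt_of_ne fun h =>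
    zero_ne_one ((Finset.prod_eq_zero (Finset.mem_univ i) h.symm).symm.trans hprod)
  -- AM-GM factorwise, squared to avoid roots: `x ≤ ((1 + x) / 2) ^ 2`, strict unless `x = 1`.
  have hsq : ∏ i, x i < ∏ i, ((1 + x i) / 2) ^ 2 := by
    refine Finset.prod_lt_prod (fun i _ => hpos i)
      (fun i _ => by nlinarith [sq_nonneg (x i - 1)]) ?_
    obtain ⟨i, hi⟩ := hne
    exact ⟨i, Finset.mem_univ i, by nlinarith [sq_pos_of_ne_zero (sub_ne_zero.2 hi)]⟩
  rw [hprod, Finset.prod_pow] at hsq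
  exact lt_of_pow_lt_pow_left₀ 2 (Finset.prod_nonneg fun i _ => by linarith [hx i])
    (by simpa using hsq)

namespace Matrix

variable {n : Type*}

theorem convex_setOf_posSemidef_sub (S : Matrix n n ℝ) :
    Convex ℝ {A : Matrix n n ℝ | (S - A).PosSemidef} := by
  intro A hA B hB a b ha hb hab
  have : S - (a • A + b • B) = a • (S - A) + b • (S - B) := by
    linear_combination (norm := module) -hab • S
  show (S - _).PosSemidef
  exact this ▸ (hA.smul ha).add (hB.smul hb)

variable [Fintype n]

theorem isClosed_setOf_posSemidef : IsClosed {A : Matrix n n ℝ | A.PosSemidef} := by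
  simp only [posSemidef_iff_dotProduct_mulVec, Set.ofPred_and, Set.ofPred_forall]
  refine .inter (isClosed_eq continuous_id.matrix_conjTranspose continuous_id) ?_
  exact isClosed_iInter fun x => isClosed_le continuous_const
    (continuous_const.dotProduct (continuous_id.matrix_mulVec continuous_const))

theorem PosSemidef.two_mul_abs_apply_le {A : Matrix n n ℝ} (hA : A.PosSemidef) (i j : n) :
    2 * |A i j| ≤ A i i + A j j := by
  classical
  have hquad (s : ℝ) : 0 ≤ A i i + s * (A i j + A j i) + s ^ 2 * A j j := by
    have := hA.dotProduct_mulVec_nonneg (Pi.single i 1 + s • Pi.single j 1)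
    simp only [star_trivial, mulVec_add, mulVec_smul, dotProduct_add, add_dotProduct,
      dotProduct_smul, smul_dotProduct, mulVec_single, single_dotProduct, smul_eq_mul,
      MulOpposite.op_one, col_apply, one_mul, one_smul] at this
    linear_combination this
  have hsymm : A j i = A i j := hA.isHermitian.apply i j
  cases abs_cases (A i j) <;> linarith [hquad 1, hquad (-1)]

theorem isCompact_setOf_posSemidef_and_posSemidef_sub (S : Matrix n n ℝ) :
    IsCompact {A : Matrix n n ℝ | A.PosSemidef ∧ (S - A).PosSemidef} := by
  have hbox : IsCompact (Set.univ.pi fun i => Set.univ.pi fun j =>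
      Set.Icc (-((S i i + S j j) / 2)) ((S i i + S j j) / 2)) :=
    isCompact_univ_pi fun _ => isCompact_univ_pi fun _ => isCompact_Icc
  refine hbox.of_isClosed_subset (isClosed_setOf_posSemidef.inter
    (isClosed_setOf_posSemidef.preimage (continuous_const.sub continuous_id))) ?_
  rintro A ⟨hA, hSA⟩ i - j -
  have hle (k : n) : A k k ≤ S k k := sub_nonneg.1 hSA.diag_nonneg
  have := PosSemidef.two_mul_abs_apply_le hA i j
  show A i j ∈ Set.Icc _ _
  rw [Set.mem_Icc, ← abs_le]
  linarith [hle i, hle j]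

variable [DecidableEq n]

open scoped MatrixOrder in
theorem PosDef.exists_pos_posSemidef_sub_smul_one {S : Matrix n n ℝ} (hS : S.PosDef) :
    ∃ r : ℝ, 0 < r ∧ ∀ ε ≤ r, (S - ε • (1 : Matrix n n ℝ)).PosSemidef := by
  cases subsingleton_or_nontrivial (Matrix n n ℝ)
  · exact ⟨1, one_pos, fun ε _ => Subsingleton.elim 0 (S - ε • 1) ▸ .zero⟩
  obtain ⟨r, hr, hrS⟩ := (CFC.exists_pos_algebraMap_le_iff hS.isHermitian.isSelfAdjoint).2
    fun x hx => hS.isStrictlyPositive.spectrum_pos hx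
  rw [Algebra.algebraMap_eq_smul_one] at hrS
  refine ⟨r, hr, fun ε hε => ?_⟩
  have : S - ε • 1 = (S - r • 1) + (r - ε) • 1 := by module
  exact this ▸ (le_iff.1 hrS).add (PosSemidef.one.smul (sub_nonneg.2 hε))

theorem IsHermitian.det_cfc {A : Matrix n n ℝ} (hA : A.IsHermitian) (f : ℝ → ℝ) :
    (cfc f A).det = ∏ i, f (hA.eigenvalues i) := by
  simp [hA.cfc_eq, IsHermitian.cfc, -Unitary.conjStarAlgAut_apply]

theorem PosSemidef.one_lt_det_half_one_add {N : Matrix n n ℝ} (hN : N.PosSemidef)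
    (hdet : N.det = 1) (hne : N ≠ 1) : 1 < ((1 / 2 : ℝ) • (1 + N)).det := by
  have hN' : IsSelfAdjoint N := hN.isHermitian
  have hcfc : (1 / 2 : ℝ) • (1 + N) = cfc (fun x : ℝ => (1 + x) / 2) N := by
    simp_rw [div_eq_inv_mul]
    rw [cfc_const_mul _ _ N, cfc_const_add _ _ N, cfc_id' ℝ N, Algebra.algebraMap_eq_smul_one]
    simp
  rw [hcfc, hN.isHermitian.det_cfc]
  refine one_lt_prod_half_one_add hN.eigenvalues_nonneg ?_ ?_
  · simpa [hN.isHermitian.det_eq_prod_eigenvalues] using hdet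
  · by_contra! h
    refine hne ?_
    calc N = cfc id N := (cfc_id ℝ N).symm
      _ = cfc (fun _ => 1) N := cfc_congr ?_
      _ = 1 := cfc_const_one ℝ N
    rw [hN.isHermitian.spectrum_real_eq_range_eigenvalues]
    rintro _ ⟨i, rfl⟩
    exact h i

open scoped MatrixOrder in
theorem PosDef.det_lt_det_half_add {A B : Matrix n n ℝ} (hA : A.PosDef) (hB : B.PosSemidef)
    (hdet : B.det = A.det) (hne : B ≠ A) : A.det < ((1 / 2 : ℝ) • (A + B)).det := by
  set R := CFC.sqrt A
  have hRR : R * R = A := CFC.sqrt_mul_sqrt_self A hA.posSemidef.nonneg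
  have hRu : IsUnit R.det :=
    (isUnit_iff_isUnit_det R).1 ((CFC.isUnit_sqrt_iff A hA.posSemidef.nonneg).2 hA.isUnit)
  have hRh : Rᴴ = R := (CFC.sqrt_nonneg A).posSemidef.isHermitian
  have hdet_conj (X : Matrix n n ℝ) : (R * X * R).det = A.det * X.det := by
    rw [← hRR, det_mul, det_mul, det_mul]; ring
  set N := R⁻¹ * B * R⁻¹
  have hNR : R * N * R = B := by
    simp only [N, ← mul_assoc, mul_nonsing_inv _ hRu, one_mul]
    rw [mul_assoc, nonsing_inv_mul _ hRu, mul_one]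
  have hN : N.PosSemidef := by
    have := hB.mul_mul_conjTranspose_same R⁻¹
    rwa [conjTranspose_nonsing_inv, hRh] at this
  have hNdet : N.det = 1 := by
    have := hdet_conj N
    rwa [hNR, hdet, eq_comm, mul_eq_left₀ hA.det_pos.ne'] at this
  have hN1 : N ≠ 1 := fun h => hne (by rw [← hNR, h, mul_one, hRR])
  have hmid : (1 / 2 : ℝ) • (A + B) = R * ((1 / 2 : ℝ) • (1 + N)) * R := by
    rw [← hNR, ← hRR]
    simp only [mul_smul_comm, smul_mul_assoc, mul_add, add_mul, mul_one, mul_assoc]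
  rw [hmid, hdet_conj]
  exact lt_mul_of_one_lt_right hA.det_pos (hN.one_lt_det_half_one_add hNdet hN1)

theorem eq_of_isMaxOn_det {s : Set (Matrix n n ℝ)} (hs : Convex ℝ s)
    (hpsd : ∀ A ∈ s, A.PosSemidef) {A B : Matrix n n ℝ} (hA : A ∈ s) (hmax : IsMaxOn det s A)
    (hpos : 0 < A.det) (hB : B ∈ s) (hdet : A.det ≤ B.det) : B = A := by
  by_contra hne
  have hmid : (1 / 2 : ℝ) • (A + B) ∈ s := by
    simpa [smul_add] using hs hA hB (by norm_num) (by norm_num) (add_halves (1 : ℝ))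
  have hAd : A.PosDef := (hpsd A hA).posDef_iff_det_ne_zero.2 hpos.ne'
  exact (hAd.det_lt_det_half_add (hpsd B hB) (le_antisymm (hmax hB) hdet) hne).not_ge (hmax hmid)

end Matrix

section FeasibleSet

variable {m : Type*} (S : Matrix (m ⊕ Unit) (m ⊕ Unit) ℝ) (D1 : Matrix m m ℝ)

def feasibleSet (γ : ℝ) : Set (Matrix (m ⊕ Unit) (m ⊕ Unit) ℝ) :=
  {Θ | Θ.IsSymm ∧ (D1 - Θ.toBlocks₁₁).PosSemidef ∧ Θ (Sum.inr ()) (Sum.inr ()) ≤ γ ∧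
    Θ.PosSemidef ∧ (S - Θ).PosSemidef}

theorem convex_feasibleSet (γ : ℝ) : Convex ℝ (feasibleSet S D1 γ) := by
  rintro A ⟨hA₁, hA₂, hA₃, hA₄, hA₅⟩ B ⟨hB₁, hB₂, hB₃, hB₄, hB₅⟩ a b ha hb hab
  refine ⟨(hA₁.smul a).add (hB₁.smul b), Matrix.convex_setOf_posSemidef_sub D1 hA₂ hB₂ ha hb hab,
    ?_, (hA₄.smul ha).add (hB₄.smul hb), Matrix.convex_setOf_posSemidef_sub S hA₅ hB₅ ha hb hab⟩
  exact convex_Iic γ hA₃ hB₃ ha hb hab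

theorem smul_mem_feasibleSet {S D1} (hS : S.PosSemidef) (hD1 : D1.PosSemidef) {γ γ' t : ℝ}
    {Θ : Matrix (m ⊕ Unit) (m ⊕ Unit) ℝ} (hΘ : Θ ∈ feasibleSet S D1 γ) (ht₀ : 0 ≤ t)
    (ht₁ : t ≤ 1) (htγ : t * γ ≤ γ') : t • Θ ∈ feasibleSet S D1 γ' := by
  obtain ⟨h₁, h₂, h₃, h₄, h₅⟩ := hΘ
  refine ⟨h₁.smul t, ?_, (mul_le_mul_of_nonneg_left h₃ ht₀).trans htγ, h₄.smul ht₀, ?_⟩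
  · exact (Matrix.convex_setOf_posSemidef_sub D1).smul_mem_of_zero_mem (by simpa using hD1) h₂
      ⟨ht₀, ht₁⟩
  · exact (Matrix.convex_setOf_posSemidef_sub S).smul_mem_of_zero_mem (by simpa using hS) h₅
      ⟨ht₀, ht₁⟩

theorem min_smul_mem_feasibleSet {S D1} (hS : S.PosSemidef) (hD1 : D1.PosSemidef) {γ₀ γ : ℝ}
    (hγ₀ : 0 < γ₀) (hγ : 0 ≤ γ) {Θ : Matrix (m ⊕ Unit) (m ⊕ Unit) ℝ}
    (hΘ : Θ ∈ feasibleSet S D1 γ₀) : min 1 (γ / γ₀) • Θ ∈ feasibleSet S D1 γ :=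
  smul_mem_feasibleSet hS hD1 hΘ (le_min zero_le_one (div_nonneg hγ hγ₀.le)) (min_le_left _ _)
    ((mul_le_mul_of_nonneg_right (min_le_right _ _) hγ₀.le).trans_eq (div_mul_cancel₀ _ hγ₀.ne'))

variable [Fintype m]

theorem isClosed_setOf_mem_feasibleSet :
    IsClosed {p : ℝ × Matrix (m ⊕ Unit) (m ⊕ Unit) ℝ | p.2 ∈ feasibleSet S D1 p.1} := by
  refine .inter (isClosed_eq continuous_snd.matrix_transpose continuous_snd) <|
    .inter (Matrix.isClosed_setOf_posSemidef.preimage ?_) <|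
    .inter (isClosed_le (continuous_snd.matrix_elem _ _) continuous_fst) <|
    .inter (Matrix.isClosed_setOf_posSemidef.preimage continuous_snd)
      (Matrix.isClosed_setOf_posSemidef.preimage (continuous_const.sub continuous_snd))
  exact continuous_const.sub (continuous_snd.matrix_submatrix Sum.inl Sum.inl)

variable [DecidableEq m] {S D1}

theorem exists_det_pos_mem_feasibleSet (hS : S.PosDef) (hD1 : D1.PosDef) {γ : ℝ} (hγ : 0 < γ) :
    ∃ C ∈ feasibleSet S D1 γ, 0 < C.det := by
  obtain ⟨rS, hrS, hS'⟩ := hS.exists_pos_posSemidef_sub_smul_one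
  obtain ⟨rD, hrD, hD1'⟩ := hD1.exists_pos_posSemidef_sub_smul_one
  set ε := min (min rS rD) γ
  have hε : 0 < ε := lt_min (lt_min hrS hrD) hγ
  have hblock : (ε • 1 : Matrix (m ⊕ Unit) (m ⊕ Unit) ℝ).toBlocks₁₁ = ε • 1 := by
    rw [← fromBlocks_one, fromBlocks_smul, toBlocks_fromBlocks₁₁]
  refine ⟨ε • 1, ⟨isSymm_one.smul ε, hblock ▸ hD1' ε ?_, by simp [ε], PosSemidef.one.smul hε.le,
    hS' ε ?_⟩, by simp [hε]⟩
  · exact (min_le_left _ _).trans (min_le_left _ _)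
  · exact (min_le_left _ _).trans (min_le_right _ _)

end FeasibleSet

theorem stmt_10 {m : ℕ}
    (S : Matrix (Fin m ⊕ Unit) (Fin m ⊕ Unit) ℝ)
    (D1 : Matrix (Fin m) (Fin m) ℝ)
    (hS : S.PosDef) (hD1 : D1.PosDef)
    (T : ℝ → Matrix (Fin m ⊕ Unit) (Fin m ⊕ Unit) ℝ)
    (hT : ∀ γ : ℝ, 0 < γ →
      ((T γ).IsSymm ∧ (D1 - (T γ).toBlocks₁₁).PosSemidef ∧
        (T γ) (Sum.inr ()) (Sum.inr ()) ≤ γ ∧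
        (T γ).PosSemidef ∧ (S - T γ).PosSemidef) ∧
      ∀ Θ : Matrix (Fin m ⊕ Unit) (Fin m ⊕ Unit) ℝ,
        (Θ.IsSymm ∧ (D1 - Θ.toBlocks₁₁).PosSemidef ∧
          Θ (Sum.inr ()) (Sum.inr ()) ≤ γ ∧
          Θ.PosSemidef ∧ (S - Θ).PosSemidef) →
        Θ.det ≤ (T γ).det) :
    ContinuousOn T (Set.Ioi 0) := by
  have hfeas (γ : ℝ) (hγ : 0 < γ) : T γ ∈ feasibleSet S D1 γ := (hT γ hγ).1
  have hmax (γ : ℝ) (hγ : 0 < γ) : IsMaxOn det (feasibleSet S D1 γ) (T γ) :=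
    isMaxOn_iff.2 (hT γ hγ).2
  intro γ₀ (hγ₀ : 0 < γ₀)
  let lower (γ : ℝ) : ℝ := min 1 (γ / γ₀) ^ Fintype.card (Fin m ⊕ Unit) * (T γ₀).det
  have hlower (γ : ℝ) (hγ : 0 < γ) : lower γ ≤ (T γ).det := by
    have := (hT γ hγ).2 _
      (min_smul_mem_feasibleSet hS.posSemidef hD1.posSemidef hγ₀ hγ.le (hfeas γ₀ hγ₀))
    rwa [det_smul] at this
  have hclosed : IsClosed {p : ℝ × Matrix (Fin m ⊕ Unit) (Fin m ⊕ Unit) ℝ |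
      p.2 ∈ feasibleSet S D1 p.1 ∧ lower p.1 ≤ p.2.det} :=
    (isClosed_setOf_mem_feasibleSet S D1).inter (isClosed_le
      (((continuous_const.min (continuous_fst.div_const γ₀)).pow _).mul continuous_const)
      continuous_snd.matrix_det)
  refine (isCompact_setOf_posSemidef_and_posSemidef_sub S).tendsto_nhds_of_unique_mapClusterPt
    (eventually_mem_nhdsWithin.mono fun γ hγ => ⟨(hfeas γ hγ).2.2.2.1, (hfeas γ hγ).2.2.2.2⟩)
    fun x _ hx => ?_
  obtain ⟨hxfeas, hxdet⟩ :=
    hclosed.mem_of_mapClusterPt (hx.prodMk (tendsto_id.mono_left nhdsWithin_le_nhds))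
    (eventually_mem_nhdsWithin.mono fun γ hγ => ⟨hfeas γ hγ, hlower γ hγ⟩)
  obtain ⟨C, hC, hCdet⟩ := exists_det_pos_mem_feasibleSet hS hD1 hγ₀
  exact eq_of_isMaxOn_det (convex_feasibleSet S D1 γ₀) (fun A hA => hA.2.2.2.1) (hfeas γ₀ hγ₀)
    (hmax γ₀ hγ₀) (hCdet.trans_le (hmax γ₀ hγ₀ hC)) hxfeas (by simpa [lower, hγ₀.ne'] using hxdet)
end
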